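/- Let α' ∈ R and s', p' ∈ K be such that (1, α') is a K-basis of R and α'² = s'·α' - p'. Then: (i) σ(α') = s' - α'; (ii) if ω' is a unit of R such that Δ_ω(u) = u ⊗ (ω'·α') - (u·σ(α')) ⊗ ω' for all u ∈ R, then ω'·(α' - σ(α')) = ω·(α - σ(α)) and ω'·σ(ω')⁻¹ = ω·σ(ω)⁻¹; and (iii) for such ω', the map ε also satisfies ε(ω') = 0 and ε(ω'·α') = 1. (That is, the involution σ, the element δ = ω·(α - σ(α)), the element θ = ω·σ(ω)⁻¹, and the counit ε do not depend on the choice of K-generator of R.) -/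

import Mathlib

open Polynomial TensorProduct

noncomputable section

variable {K : Type*} [CommRing K]

/-- The quadratic `K`-algebra `K[X]/(X² - s·X + p)`. -/
abbrev Quad (s p : K) : Type _ := AdjoinRoot (X ^ 2 - C s * X + C p)

/-- The image of `X`, i.e. the generator `α`. -/
def qα (s p : K) : Quad s p := AdjoinRoot.root _

lemma quad_aeval_root (s p : K) :
    (aeval (qα s p)) (X ^ 2 - C s * X + C p) = 0 := by
  simp [qα, AdjoinRoot.aeval_eq, AdjoinRoot.mk_self]

/-- The involution `σ` of the quadratic algebra, with `σ α = s - α`. -/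
def qσ (s p : K) : Quad s p →ₐ[K] Quad s p :=
  AdjoinRoot.liftAlgHom _ (Algebra.ofId K (Quad s p)) (algebraMap K (Quad s p) s - qα s p) (by
    rw [Algebra.toRingHom_ofId, ← aeval_def]
    have h := quad_aeval_root s p
    simp only [map_add, map_sub, map_mul, map_pow, aeval_X, aeval_C] at h ⊢
    linear_combination h)
/-- The coproduct `Δ_ω : u ↦ u ⊗ (ω·α) - (u·σ(α)) ⊗ ω`, as a `K`-linear map. -/
def qΔ (s p : K) (w : Quad s p) : Quad s p →ₗ[K] Quad s p ⊗[K] Quad s p :=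
  (TensorProduct.mk K (Quad s p) (Quad s p)).flip (w * qα s p)
    - ((TensorProduct.mk K (Quad s p) (Quad s p)).flip w).comp
        (LinearMap.mulRight K (qσ s p (qα s p)))

/-! Every `z` in `K[X]/(X² - sX + p)` satisfies `σ z = t - z` and `z · σ z = n` with `t, n ∈ K`
(check it on `z = a + bα`). For `z = α'` this gives `α'² = tα' - n`, and comparing with
`α'² = s'α' - p'` in the basis `(1, α')` forces `t = s'`. Applying the `α'`-coordinate of the
basis `(1, α')` to the first tensor factor of `Δ_ω(1)` gives `ω' = y·ω`, where `α = x + yα'`;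
the remaining identities are computations with this scalar `y`, which is a unit of `R` because
`ω` and `ω'` are. -/

lemma eq_algebraMap_sub_of_sq_eq {A : Type*} [CommRing A] [Algebra K A] {z w : A}
    {t n s' p' : K} (hli : LinearIndependent K ![1, z]) (hw : w = algebraMap K A t - z)
    (hn : z * w = algebraMap K A n)
    (hz : z ^ 2 = algebraMap K A s' * z - algebraMap K A p') :
    w = algebraMap K A s' - z := by
  have hdep : (p' - n) • (1 : A) + (t - s') • z = 0 := by
    simp only [Algebra.smul_def, mul_one, map_sub]
    linear_combination hn - z * hw + hz
  rw [hw, sub_eq_zero.1 (LinearIndependent.pair_iff.1 hli _ _ hdep).2]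

lemma mul_inverse_map_eq_of_eq_algebraMap_mul {A : Type*} [CommRing A] [Algebra K A]
    (σ : A →ₐ[K] A) {u v : A} {y : K} (hy : IsUnit (algebraMap K A y))
    (h : v = algebraMap K A y * u) :
    v * Ring.inverse (σ v) = u * Ring.inverse (σ u) := by
  rw [h, map_mul, σ.commutes, Ring.inverse_mul (Or.inl hy)]
  calc algebraMap K A y * u * (Ring.inverse (σ u) * Ring.inverse (algebraMap K A y))
      = algebraMap K A y * Ring.inverse (algebraMap K A y) * (u * Ring.inverse (σ u)) := by ring
    _ = u * Ring.inverse (σ u) := by rw [Ring.mul_inverse_cancel _ hy, one_mul]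

section Quad

variable (s p : K)

lemma qα_sq : qα s p ^ 2 = algebraMap K (Quad s p) s * qα s p - algebraMap K (Quad s p) p := by
  have h := quad_aeval_root s p
  simp only [map_add, map_sub, map_mul, map_pow, aeval_X, aeval_C] at h
  linear_combination h

lemma qσ_qα : qσ s p (qα s p) = algebraMap K (Quad s p) s - qα s p :=
  AdjoinRoot.liftAlgHom_root _ _ _ _

lemma exists_eq_algebraMap_add_mul_qα (z : Quad s p) :
    ∃ a b : K, z = algebraMap K (Quad s p) a + algebraMap K (Quad s p) b * qα s p := by
  induction z using AdjoinRoot.induction_on with | ih f => ?_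
  induction f using Polynomial.induction_on with
  | C a => exact ⟨a, 0, by simp [AdjoinRoot.algebraMap_eq]⟩
  | add f g hf hg =>
    obtain ⟨a, b, hf⟩ := hf
    obtain ⟨c, d, hg⟩ := hg
    exact ⟨a + c, b + d, by rw [map_add, hf, hg]; simp only [map_add]; ring⟩
  | monomial n a h =>
    obtain ⟨c, d, h⟩ := h
    refine ⟨-(d * p), c + d * s, ?_⟩
    rw [pow_succ (X : K[X]) n, ← mul_assoc, map_mul (AdjoinRoot.mk _), h, AdjoinRoot.mk_X, ← qα]
    simp only [map_add, map_mul, map_neg]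
    linear_combination algebraMap K (Quad s p) d * qα_sq s p

variable {s p}

lemma exists_qσ_eq_algebraMap_sub (z : Quad s p) :
    ∃ t : K, qσ s p z = algebraMap K (Quad s p) t - z := by
  obtain ⟨a, b, rfl⟩ := exists_eq_algebraMap_add_mul_qα s p z
  refine ⟨2 * a + b * s, ?_⟩
  simp only [map_add, map_mul, AlgHom.commutes, qσ_qα, map_ofNat]
  ring

lemma exists_mul_qσ_eq_algebraMap (z : Quad s p) :
    ∃ n : K, z * qσ s p z = algebraMap K (Quad s p) n := by
  obtain ⟨a, b, rfl⟩ := exists_eq_algebraMap_add_mul_qα s p z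
  refine ⟨a * a + a * b * s + b * b * p, ?_⟩
  simp only [map_add, map_mul, AlgHom.commutes, qσ_qα]
  linear_combination -(algebraMap K (Quad s p) b) ^ 2 * qα_sq s p

lemma qσ_eq_algebraMap_sub_of_sq_eq {α' : Quad s p} {s' p' : K}
    (hli : LinearIndependent K ![1, α'])
    (hα' : α' ^ 2 = algebraMap K (Quad s p) s' * α' - algebraMap K (Quad s p) p') :
    qσ s p α' = algebraMap K (Quad s p) s' - α' := by
  obtain ⟨t, ht⟩ := exists_qσ_eq_algebraMap_sub α'
  obtain ⟨n, hn⟩ := exists_mul_qσ_eq_algebraMap α'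
  exact eq_algebraMap_sub_of_sq_eq hli ht hn hα'

lemma eq_smul_of_qΔ_one_eq {ω ω' α' : Quad s p} {s' : K} (ψ : Quad s p →ₗ[K] K)
    (hψ1 : ψ 1 = 0) (hψα' : ψ α' = 1) (hσα' : qσ s p α' = algebraMap K (Quad s p) s' - α')
    (h : qΔ s p ω 1 = 1 ⊗ₜ[K] (ω' * α') - (1 * qσ s p α') ⊗ₜ[K] ω') :
    ω' = ψ (qα s p) • ω := by
  have hψK (t : K) : ψ (algebraMap K (Quad s p) t) = 0 := by
    rw [Algebra.algebraMap_eq_smul_one, map_smul, hψ1, smul_zero]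
  have := congrArg ((TensorProduct.lid K (Quad s p)).toLinearMap ∘ₗ (ψ.rTensor (Quad s p))) h
  simp only [qΔ, LinearMap.sub_apply, LinearMap.comp_apply, LinearMap.flip_apply,
    TensorProduct.mk_apply, LinearMap.mulRight_apply, one_mul, qσ_qα, hσα', map_sub,
    LinearMap.rTensor_tmul, LinearEquiv.coe_coe, TensorProduct.lid_tmul, hψ1, hψα', hψK,
    zero_smul, zero_sub, neg_smul, neg_neg, one_smul] at this
  exact this.symm

end Quad

/-- Independence of the structure constants on the choice of `K`-generator:
if `(1, α')` is a `K`-basis with `α'² = s'·α' - p'`, then `σ α' = s' - α'`;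
if moreover `ω'` is a unit expressing the same coproduct `Δ_ω` in terms of `α'`,
then `ω'·(α' - σ α') = ω·(α - σ α)`, `ω'·σ(ω')⁻¹ = ω·σ(ω)⁻¹`, `ε ω' = 0` and
`ε (ω'·α') = 1`. -/
theorem stmt14 (s p : K) (ω : (Quad s p)ˣ) (ε : Quad s p →ₗ[K] K)
    (hω : ε (ω : Quad s p) = 0) (hωα : ε ((ω : Quad s p) * qα s p) = 1)
    (α' : Quad s p) (s' p' : K)
    (hbasis : ∃ b : Module.Basis (Fin 2) K (Quad s p), b 0 = 1 ∧ b 1 = α')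
    (hα' : α' ^ 2 = algebraMap K (Quad s p) s' * α' - algebraMap K (Quad s p) p') :
    qσ s p α' = algebraMap K (Quad s p) s' - α' ∧
    ∀ ω' : (Quad s p)ˣ,
      (∀ u : Quad s p,
          qΔ s p (ω : Quad s p) u
            = u ⊗ₜ[K] ((ω' : Quad s p) * α')
              - (u * qσ s p α') ⊗ₜ[K] (ω' : Quad s p)) →
        ((ω' : Quad s p) * (α' - qσ s p α')
            = (ω : Quad s p) * (qα s p - qσ s p (qα s p)) ∧
         (ω' : Quad s p) * Ring.inverse (qσ s p (ω' : Quad s p))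
            = (ω : Quad s p) * Ring.inverse (qσ s p (ω : Quad s p)) ∧
         ε (ω' : Quad s p) = 0 ∧ ε ((ω' : Quad s p) * α') = 1) := by
  obtain ⟨b, hb0, hb1⟩ := hbasis
  have hli : LinearIndependent K ![1, α'] := by
    convert b.linearIndependent
    ext i; fin_cases i <;> simp [hb0, hb1]
  have hσα' := qσ_eq_algebraMap_sub_of_sq_eq hli hα'
  refine ⟨hσα', fun ω' hΔ => ?_⟩
  set x := b.coord 0 (qα s p)
  set y := b.coord 1 (qα s p)
  have hα : qα s p = algebraMap K (Quad s p) x + algebraMap K (Quad s p) y * α' := by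
    conv_lhs => rw [← b.sum_repr (qα s p)]
    simp [Fin.sum_univ_two, hb0, hb1, Algebra.smul_def, x, y]
  have hω' : (ω' : Quad s p) = algebraMap K (Quad s p) y * ω := by
    rw [← Algebra.smul_def]
    exact eq_smul_of_qΔ_one_eq (b.coord 1) (by simp [← hb0]) (by simp [← hb1]) hσα' (hΔ 1)
  have hy : IsUnit (algebraMap K (Quad s p) y) := by
    rw [show algebraMap K (Quad s p) y = ω' * ω⁻¹ by rw [hω', mul_assoc, Units.mul_inv, mul_one]]
    exact (ω' * ω⁻¹).isUnit
  refine ⟨?_, mul_inverse_map_eq_of_eq_algebraMap_mul (qσ s p) hy hω', ?_, ?_⟩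
  · rw [hω', hα]
    simp only [map_add, map_mul, AlgHom.commutes]
    ring
  · rw [hω', ← Algebra.smul_def, map_smul, hω, smul_zero]
  · have hω'α' : (ω' : Quad s p) * α' = ω * qα s p - x • (ω : Quad s p) := by
      rw [hω', hα, Algebra.smul_def]
      ring
    rw [hω'α', map_sub, map_smul, hωα, hω, smul_zero, sub_zero]
end
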